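/- Without loss of optimality, the supremum defining C_{h,σ²}(A, E) may be restricted to laws of X satisfying, for every k ∈ {1,…,n}, with probability one: if X_k > 0 then X_1 = X_2 = … = X_{k−1} = A. That is, the supremum of I(X;Y) over all admissible laws equals the supremum over admissible laws with this additional structural property. -/

import Mathlib

open MeasureTheory ProbabilityTheory Real Filter
open scoped NNReal ENNReal Classical

noncomputable section

/-- Kullback–Leibler divergence (Mathlib's `ProbabilityTheory.klDiv`). -/
def klDiv {α : Type*} [MeasurableSpace α] (μ ν : Measure α) : EReal :=
  if μ ≪ ν ∧ Integrable (llr μ ν) μ then ((∫ x, llr μ ν x ∂μ : ℝ) : EReal) else ⊤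

/-- Mutual information of a joint law: KL divergence of the joint law from the
product of its marginals. -/
def mutualInfo {α β : Type*} [MeasurableSpace α] [MeasurableSpace β]
    (joint : Measure (α × β)) : EReal :=
  klDiv joint ((joint.map Prod.fst).prod (joint.map Prod.snd))

/-- Partial sums `s_k = h_1 + ⋯ + h_k`. -/
def sCum {n : ℕ} (h : Fin n → ℝ) (k : ℕ) : ℝ :=
  ∑ i : Fin n, if i.val < k then h i else 0

/-- Joint law of `(X, Y)` with `Y = hᵀX + Z`, `Z ~ N(0, v)` independent of `X`. -/
def misoJoint {n : ℕ} (h : Fin n → ℝ) (v : ℝ≥0) (μ : Measure (Fin n → ℝ)) :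
    Measure ((Fin n → ℝ) × ℝ) :=
  (μ.prod (gaussianReal 0 v)).map (fun p => (p.1, (∑ k, h k * p.1 k) + p.2))

/-- MISO capacity under peak-power constraint `A` and average-power constraint `E`. -/
def misoCapacity {n : ℕ} (h : Fin n → ℝ) (v : ℝ≥0) (A E : ℝ) : EReal :=
  ⨆ μ ∈ {μ : Measure (Fin n → ℝ) | IsProbabilityMeasure μ ∧
      (∀ k, ∀ᵐ x ∂μ, x k ∈ Set.Icc 0 A) ∧ (∑ k, ∫ x, x k ∂μ) ≤ E},
    mutualInfo (misoJoint h v μ)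

/-- MISO capacity under only an average-power constraint `E`. -/
def misoCapacityAvg {n : ℕ} (h : Fin n → ℝ) (v : ℝ≥0) (E : ℝ) : EReal :=
  ⨆ μ ∈ {μ : Measure (Fin n → ℝ) | IsProbabilityMeasure μ ∧
      (∀ k, ∀ᵐ x ∂μ, 0 ≤ x k) ∧ (∑ k, ∫ x, x k ∂μ) ≤ E},
    mutualInfo (misoJoint h v μ)

/-- Joint law of `(X̄, X̄ + Z)` for the unit-gain SISO channel. -/
def sisoJoint (v : ℝ≥0) (μ : Measure ℝ) : Measure (ℝ × ℝ) :=
  (μ.prod (gaussianReal 0 v)).map (fun p => (p.1, p.1 + p.2))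

/-- Unit-gain SISO capacity under peak-power constraint `A` and average-power
constraint `E`. -/
def sisoCapacity (v : ℝ≥0) (A E : ℝ) : EReal :=
  ⨆ μ ∈ {μ : Measure ℝ | IsProbabilityMeasure μ ∧
      (∀ᵐ x ∂μ, x ∈ Set.Icc 0 A) ∧ (∫ x, x ∂μ) ≤ E},
    mutualInfo (sisoJoint v μ)

/-- Unit-gain SISO capacity under only an average-power constraint `E`. -/
def sisoCapacityAvg (v : ℝ≥0) (E : ℝ) : EReal :=
  ⨆ μ ∈ {μ : Measure ℝ | IsProbabilityMeasure μ ∧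
      (∀ᵐ x ∂μ, 0 ≤ x) ∧ (∫ x, x ∂μ) ≤ E},
    mutualInfo (sisoJoint v μ)

/-- The interval `(s_{k-1} A, s_k A]` (with the first one being `[0, s_1 A]`)
corresponding to the event `U = k` (0-indexed: `k ∈ Fin n` stands for `k+1`). -/
def uInterval {n : ℕ} (h : Fin n → ℝ) (A : ℝ) (k : Fin n) : Set ℝ :=
  if k.val = 0 then Set.Icc 0 (sCum h 1 * A)
  else Set.Ioc (sCum h k.val * A) (sCum h (k.val + 1) * A)

/-- The average input power `∑_k p_k ((E[X̄ | U=k] - A s_{k-1})/h_k + (k-1) A)`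
consumed to generate a scalar law of `X̄`. -/
def avgPowerUse {n : ℕ} (h : Fin n → ℝ) (A : ℝ) (μ : Measure ℝ) : ℝ :=
  ∑ k : Fin n,
    (((∫ x in uInterval h A k, x ∂μ) - A * sCum h k.val * (μ (uInterval h A k)).toReal) / h k
      + (k.val : ℝ) * A * (μ (uInterval h A k)).toReal)

/-- The threshold `α_th`. -/
def alphaTh {n : ℕ} (h : Fin n → ℝ) : ℝ :=
  1 / 2 + (1 / sCum h n) * ∑ k : Fin n, h k * (k.val : ℝ)


end

/-!
The channel output depends on the input only through the noiseless intensity `h ⬝ X`: the joint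
law of `(X, Y)` is the product of its marginals reweighted by a density that factors through
`h ⬝ X`, so `I(X; Y) = I(h ⬝ X; Y)`. Replacing `X` by the energy-efficient input `X'` with the
same `h ⬝ X'` (LEDs switched on to peak power in order of decreasing gain) therefore preserves the
mutual information and the peak constraint, and it does not increase `∑ X_k`: if `m` is the first
LED of `X'` below peak, `X'_k - X_k` is nonnegative where `h_k > h_m` and nonpositive where
`h_k < h_m`, while `∑ h_k (X'_k - X_k) = 0`.
-/

noncomputable section

section EnergyEfficient

variable {n : ℕ} {h : Fin n → ℝ} {A : ℝ} {k : Fin n}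

lemma sCum_zero (h : Fin n → ℝ) : sCum h 0 = 0 := by simp [sCum]

lemma sCum_succ (h : Fin n → ℝ) (k : Fin n) : sCum h (k + 1) = sCum h k + h k := by
  have hsplit : ∀ i : Fin n, (if (i : ℕ) < k + 1 then h i else 0)
      = (if (i : ℕ) < k then h i else 0) + (if i = k then h i else 0) := by
    intro i
    rcases lt_trichotomy i k with hik | rfl | hik
    · simp [hik, hik.ne, Nat.lt_succ_of_lt (Fin.lt_def.1 hik)]
    · simp
    · have hki := Fin.lt_def.1 hik
      simp [hik.ne', show ¬(i : ℕ) < k + 1 by omega, show ¬(i : ℕ) < k by omega]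
  simp only [sCum, hsplit, Finset.sum_add_distrib, Finset.sum_ite_eq', Finset.mem_univ, if_true]

lemma sCum_mono (hh : ∀ k, 0 ≤ h k) : Monotone (sCum h) := fun a b hab =>
  Finset.sum_le_sum fun i _ => by
    split_ifs with ha hb hb
    · exact le_rfl
    · exact absurd (ha.trans_le hab) hb
    · exact hh i
    · exact le_rfl

lemma sCum_self (h : Fin n → ℝ) : sCum h n = ∑ k, h k := by simp [sCum]

lemma sCum_mul_le_succ (hk : 0 ≤ h k) (hA : 0 ≤ A) : sCum h k * A ≤ sCum h (k + 1) * A := by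
  rw [sCum_succ]
  nlinarith [mul_nonneg hk hA]

def IsEnergyEfficient (A : ℝ) (x : Fin n → ℝ) : Prop :=
  ∀ k : Fin n, 0 < x k → ∀ j : Fin n, j < k → x j = A

/-- LED `k` supplies the part of `t` lying in `[s_k A, s_{k+1} A]`. -/
def energyEfficientInput (h : Fin n → ℝ) (A t : ℝ) (k : Fin n) : ℝ :=
  (min (max t (sCum h k * A)) (sCum h (k + 1) * A) - sCum h k * A) / h k

lemma energyEfficientInput_mem_Icc (hk : 0 < h k) (hA : 0 ≤ A) (t : ℝ) :
    energyEfficientInput h A t k ∈ Set.Icc 0 A := by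
  have hle := sCum_mul_le_succ (k := k) hk.le hA
  have hsucc : sCum h (k + 1) * A = sCum h k * A + h k * A := by rw [sCum_succ]; ring
  constructor
  · exact div_nonneg (by simp [hle]) hk.le
  · rw [energyEfficientInput, div_le_iff₀ hk]
    linarith [min_le_right (max t (sCum h k * A)) (sCum h (k + 1) * A)]

lemma mul_energyEfficientInput (hk : 0 < h k) (hA : 0 ≤ A) (t : ℝ) :
    h k * energyEfficientInput h A t k = min t (sCum h (k + 1) * A) - min t (sCum h k * A) := by
  have hle := sCum_mul_le_succ (k := k) hk.le hA
  rw [energyEfficientInput, mul_div_cancel₀ _ hk.ne']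
  rcases le_total t (sCum h k * A) with ht | ht
  · rw [max_eq_right ht, min_eq_left hle, min_eq_left ht, min_eq_left (ht.trans hle)]
    ring
  · rw [max_eq_left ht, min_eq_right ht]

lemma sum_mul_energyEfficientInput (hh : ∀ k, 0 < h k) (hA : 0 ≤ A) {t : ℝ}
    (ht : t ∈ Set.Icc 0 (sCum h n * A)) : ∑ k, h k * energyEfficientInput h A t k = t := by
  simp only [mul_energyEfficientInput (hh _) hA]
  rw [Fin.sum_univ_eq_sum_range (fun j => min t (sCum h (j + 1) * A) - min t (sCum h j * A)),
    Finset.sum_range_sub (fun j => min t (sCum h j * A)), sCum_zero, zero_mul,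
    min_eq_left ht.2, min_eq_right ht.1, sub_zero]

lemma energyEfficientInput_eq_zero (hk : 0 < h k) (hA : 0 ≤ A) {t : ℝ}
    (ht : t ≤ sCum h k * A) : energyEfficientInput h A t k = 0 := by
  rw [energyEfficientInput, max_eq_right ht, min_eq_left (sCum_mul_le_succ hk.le hA), sub_self,
    zero_div]

lemma energyEfficientInput_eq_peak (hk : 0 < h k) (hA : 0 ≤ A) {t : ℝ}
    (ht : sCum h (k + 1) * A ≤ t) : energyEfficientInput h A t k = A := by
  rw [energyEfficientInput, max_eq_left ((sCum_mul_le_succ hk.le hA).trans ht), min_eq_right ht,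
    sCum_succ, div_eq_iff hk.ne']
  ring

lemma isEnergyEfficient_energyEfficientInput (hh : ∀ k, 0 < h k) (hA : 0 ≤ A) (t : ℝ) :
    IsEnergyEfficient A (energyEfficientInput h A t) := by
  intro k hk j hjk
  refine energyEfficientInput_eq_peak (hh j) hA ?_
  have hkt : sCum h k * A < t := by
    by_contra! ht
    exact hk.ne' (energyEfficientInput_eq_zero (hh k) hA ht)
  calc sCum h (j + 1) * A ≤ sCum h k * A :=
        mul_le_mul_of_nonneg_right (sCum_mono (fun i => (hh i).le) (Fin.lt_def.1 hjk)) hA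
    _ ≤ t := hkt.le

lemma sum_nonpos_of_sum_mul_eq_zero {ι : Type*} [Fintype ι] {w u : ι → ℝ} {c : ℝ} (hc : 0 < c)
    (hlt : ∀ i, w i < c → u i ≤ 0) (hgt : ∀ i, c < w i → 0 ≤ u i)
    (hwu : ∑ i, w i * u i = 0) : ∑ i, u i ≤ 0 := by
  have hle : ∀ i, c * u i ≤ w i * u i := by
    intro i
    rcases lt_trichotomy (w i) c with hi | hi | hi
    · nlinarith [hlt i hi]
    · rw [hi]
    · nlinarith [hgt i hi]
  have hsum : c * ∑ i, u i ≤ 0 := by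
    rw [Finset.mul_sum, ← hwu]
    exact Finset.sum_le_sum fun i _ => hle i
  exact nonpos_of_mul_nonpos_right hsum hc

theorem sum_le_sum_of_isEnergyEfficient (hanti : Antitone h) (hh : ∀ k, 0 < h k)
    {x y : Fin n → ℝ} (hx : ∀ k, x k ∈ Set.Icc 0 A) (hy : ∀ k, 0 ≤ y k)
    (hyee : IsEnergyEfficient A y) (hxy : ∑ k, h k * y k = ∑ k, h k * x k) :
    ∑ k, y k ≤ ∑ k, x k := by
  rw [← sub_nonpos, ← Finset.sum_sub_distrib]
  have hwu : ∑ k, h k * (y k - x k) = 0 := by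
    simp only [mul_sub, Finset.sum_sub_distrib, hxy, sub_self]
  by_cases hfull : ∀ k, y k = A
  · have hnonneg : ∀ k, 0 ≤ h k * (y k - x k) := fun k =>
      mul_nonneg (hh k).le (by linarith [hfull k, (hx k).2])
    have hzero := (Finset.sum_eq_zero_iff_of_nonneg fun k _ => hnonneg k).1 hwu
    refine (Finset.sum_eq_zero fun k hk => ?_).le
    exact (mul_eq_zero.1 (hzero k hk)).resolve_left (hh k).ne'
  · obtain ⟨m, hm, hmin⟩ := WellFounded.has_min wellFounded_lt {k | y k ≠ A} (not_forall.1 hfull)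
    refine sum_nonpos_of_sum_mul_eq_zero (hh m) (fun k hk => ?_) (fun k hk => ?_) hwu
    · have hmk : m < k := lt_of_not_ge fun hkm => hk.not_ge (hanti hkm)
      have hyk : y k = 0 := by
        by_contra hne
        exact hm (hyee k ((hy k).lt_of_ne' hne) m hmk)
      linarith [(hx k).1]
    · have hkm : k < m := lt_of_not_ge fun hmk => hk.not_ge (hanti hmk)
      have hyk : y k = A := by
        by_contra hne
        exact hmin k hne hkm
      linarith [(hx k).2]

end EnergyEfficient

section KL

variable {β γ : Type*} [MeasurableSpace β] [MeasurableSpace γ]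

lemma klDiv_withDensity (ρ : Measure β) [SigmaFinite ρ] {f : β → ℝ≥0∞} (hf : Measurable f) :
    klDiv (ρ.withDensity f) ρ =
      if Integrable (fun x => log (f x).toReal) (ρ.withDensity f)
      then ((∫ x, log (f x).toReal ∂ρ.withDensity f : ℝ) : EReal) else ⊤ := by
  have hllr : llr (ρ.withDensity f) ρ =ᵐ[ρ.withDensity f] fun x => log (f x).toReal := by
    filter_upwards [(withDensity_absolutelyContinuous ρ f).ae_le
      (Measure.rnDeriv_withDensity ρ hf)] with x hx
    simp only [llr_def, hx]
  rw [klDiv, integrable_congr hllr, integral_congr_ae hllr]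
  simp only [withDensity_absolutelyContinuous, true_and]

lemma map_withDensity_comp {ρ : Measure β} {Φ : β → γ} (hΦ : Measurable Φ) {f : γ → ℝ≥0∞}
    (hf : Measurable f) : (ρ.withDensity (f ∘ Φ)).map Φ = (ρ.map Φ).withDensity f := by
  ext s hs
  rw [Measure.map_apply hΦ hs, withDensity_apply _ (hΦ hs), withDensity_apply _ hs,
    setLIntegral_map hs hf hΦ]
  rfl

lemma klDiv_withDensity_comp (ρ : Measure β) [SigmaFinite ρ] {Φ : β → γ} (hΦ : Measurable Φ)
    [SigmaFinite (ρ.map Φ)] {f : γ → ℝ≥0∞} (hf : Measurable f) :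
    klDiv (ρ.withDensity (f ∘ Φ)) ρ = klDiv ((ρ.map Φ).withDensity f) (ρ.map Φ) := by
  have hlog : Measurable fun y => log (f y).toReal := hf.ennreal_toReal.log
  rw [klDiv_withDensity ρ (hf.comp hΦ), klDiv_withDensity _ hf, ← map_withDensity_comp hΦ hf,
    integrable_map_measure hlog.aestronglyMeasurable hΦ.aemeasurable,
    integral_map hΦ.aemeasurable hlog.aestronglyMeasurable]
  rfl

end KL

section Channel

variable {α : Type*} [MeasurableSpace α] {v : ℝ≥0}

def awgnKernel (v : ℝ≥0) : Kernel ℝ ℝ where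
  toFun t := gaussianReal t v
  measurable' := measurable_gaussianReal.comp (measurable_id.prodMk measurable_const)

instance (v : ℝ≥0) : IsMarkovKernel (awgnKernel v) :=
  ⟨fun t => (inferInstance : IsProbabilityMeasure (gaussianReal t v))⟩

lemma awgnKernel_apply (v : ℝ≥0) (t : ℝ) : awgnKernel v t = gaussianReal t v := rfl

def awgnJoint (v : ℝ≥0) (G : α → ℝ) (μ : Measure α) : Measure (α × ℝ) :=
  (μ.prod (gaussianReal 0 v)).map (fun p => (p.1, G p.1 + p.2))

lemma awgnJoint_eq_compProd {G : α → ℝ} (hG : Measurable G) (μ : Measure α) [SFinite μ] :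
    awgnJoint v G μ = μ ⊗ₘ (awgnKernel v).comap G hG := by
  have hT : Measurable fun p : α × ℝ => (p.1, G p.1 + p.2) := by fun_prop
  ext N hN
  rw [awgnJoint, Measure.map_apply hT hN, Measure.prod_apply (hT hN), Measure.compProd_apply hN]
  refine lintegral_congr fun x => ?_
  rw [Kernel.comap_apply, awgnKernel_apply, ← zero_add (G x), ← gaussianReal_map_const_add,
    Measure.map_apply (measurable_const_add _) (measurable_prodMk_left hN)]
  rfl

lemma comp_map_measure {β γ : Type*} [MeasurableSpace β] [MeasurableSpace γ] (κ : Kernel β γ)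
    {G : α → β} (hG : Measurable G) (μ : Measure α) : κ ∘ₘ μ.map G = κ.comap G hG ∘ₘ μ := by
  ext B hB
  rw [Measure.bind_apply hB (Kernel.aemeasurable _), Measure.bind_apply hB (Kernel.aemeasurable _),
    lintegral_map (κ.measurable_coe hB) hG]
  rfl

lemma awgnJoint_map_fst {G : α → ℝ} (hG : Measurable G) (μ : Measure α) [SFinite μ] :
    (awgnJoint v G μ).map Prod.fst = μ := by
  rw [awgnJoint_eq_compProd hG]
  exact Measure.fst_compProd μ _

lemma awgnJoint_map_snd {G : α → ℝ} (hG : Measurable G) (μ : Measure α) [SFinite μ] :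
    (awgnJoint v G μ).map Prod.snd = awgnKernel v ∘ₘ μ.map G := by
  rw [awgnJoint_eq_compProd hG, comp_map_measure]
  exact Measure.snd_compProd μ _

def awgnDensity (v : ℝ≥0) (ν : Measure ℝ) : ℝ → ℝ → ℝ≥0∞ :=
  (awgnKernel v).rnDeriv (Kernel.const ℝ (awgnKernel v ∘ₘ ν))

lemma ae_awgnKernel_eq_withDensity (hv : v ≠ 0) (ν : Measure ℝ) [IsFiniteMeasure ν] :
    ∀ᵐ t ∂ν, awgnKernel v t = (awgnKernel v ∘ₘ ν).withDensity (awgnDensity v ν t) := by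
  have hac : ∀ᵐ t ∂ν, awgnKernel v t ≪ awgnKernel v ∘ₘ ν :=
    Kernel.absolutelyContinuous_comp_of_absolutelyContinuous (ν := volume)
      (ae_of_all _ fun t => gaussianReal_absolutelyContinuous t hv)
  filter_upwards [hac] with t ht
  rw [← Kernel.withDensity_rnDeriv_eq (η := Kernel.const ℝ (awgnKernel v ∘ₘ ν)) ht,
    Kernel.withDensity_apply _ (Kernel.measurable_rnDeriv _ _), Kernel.const_apply]
  rfl

lemma awgnJoint_eq_withDensity (hv : v ≠ 0) {G : α → ℝ} (hG : Measurable G) (μ : Measure α)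
    [IsFiniteMeasure μ] :
    awgnJoint v G μ = (μ.prod (awgnKernel v ∘ₘ μ.map G)).withDensity
      (fun p => awgnDensity v (μ.map G) (G p.1) p.2) := by
  have hw : Measurable fun p : α × ℝ => awgnDensity v (μ.map G) (G p.1) p.2 :=
    (Kernel.measurable_rnDeriv _ _).comp (hG.prodMap measurable_id)
  have hae := ae_of_ae_map hG.aemeasurable (ae_awgnKernel_eq_withDensity hv (μ.map G))
  ext N hN
  rw [awgnJoint_eq_compProd hG, Measure.compProd_apply hN, withDensity_apply _ hN,
    ← lintegral_indicator hN, lintegral_prod _ (hw.indicator hN).aemeasurable]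
  refine lintegral_congr_ae ?_
  filter_upwards [hae] with x hx
  rw [Kernel.comap_apply, hx, withDensity_apply _ (measurable_prodMk_left hN),
    ← lintegral_indicator (measurable_prodMk_left hN)]
  rfl

lemma mutualInfo_awgnJoint_eq_klDiv (hv : v ≠ 0) {G : α → ℝ} (hG : Measurable G)
    (μ : Measure α) [IsFiniteMeasure μ] :
    mutualInfo (awgnJoint v G μ) =
      klDiv (((μ.map G).prod (awgnKernel v ∘ₘ μ.map G)).withDensity
        (Function.uncurry (awgnDensity v (μ.map G))))
        ((μ.map G).prod (awgnKernel v ∘ₘ μ.map G)) := by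
  set η := awgnKernel v ∘ₘ μ.map G
  have hprod : (μ.prod η).map (Prod.map G id) = (μ.map G).prod η := by
    rw [← Measure.map_prod_map _ _ hG measurable_id, Measure.map_id]
  have hkl := klDiv_withDensity_comp (μ.prod η) (hG.prodMap measurable_id)
    (Kernel.measurable_rnDeriv (awgnKernel v) (Kernel.const ℝ η))
  rw [hprod] at hkl
  rw [mutualInfo, awgnJoint_map_fst hG, awgnJoint_map_snd hG, awgnJoint_eq_withDensity hv hG]
  exact hkl

theorem mutualInfo_awgnJoint (hv : v ≠ 0) {G : α → ℝ} (hG : Measurable G)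
    (μ : Measure α) [IsFiniteMeasure μ] :
    mutualInfo (awgnJoint v G μ) = mutualInfo (sisoJoint v (μ.map G)) := by
  rw [mutualInfo_awgnJoint_eq_klDiv hv hG, show sisoJoint v (μ.map G) = awgnJoint v id (μ.map G)
    from rfl, mutualInfo_awgnJoint_eq_klDiv hv measurable_id, Measure.map_id]

end Channel

section Capacity

variable {n : ℕ} {h : Fin n → ℝ} {A : ℝ}

lemma sum_mul_mem_Icc (hh : ∀ k, 0 ≤ h k) {x : Fin n → ℝ} (hx : ∀ k, x k ∈ Set.Icc 0 A) :
    ∑ k, h k * x k ∈ Set.Icc 0 (sCum h n * A) := by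
  rw [sCum_self, Finset.sum_mul]
  exact ⟨Finset.sum_nonneg fun k _ => mul_nonneg (hh k) (hx k).1,
    Finset.sum_le_sum fun k _ => mul_le_mul_of_nonneg_left (hx k).2 (hh k)⟩

lemma sum_integral_map_le {μ : Measure (Fin n → ℝ)} [IsFiniteMeasure μ]
    {F : (Fin n → ℝ) → Fin n → ℝ} (hF : Measurable F) (hFA : ∀ x k, F x k ∈ Set.Icc 0 A)
    (hμA : ∀ k, ∀ᵐ x ∂μ, x k ∈ Set.Icc 0 A) (hle : ∀ᵐ x ∂μ, ∑ k, F x k ≤ ∑ k, x k) :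
    ∑ k, ∫ y, y k ∂(μ.map F) ≤ ∑ k, ∫ x, x k ∂μ := by
  have hFint : ∀ k, Integrable (fun x => F x k) μ := fun k =>
    .of_mem_Icc 0 A (by fun_prop) (ae_of_all _ fun x => hFA x k)
  have hint : ∀ k, Integrable (fun x : Fin n → ℝ => x k) μ := fun k =>
    .of_mem_Icc 0 A (measurable_pi_apply k).aemeasurable (hμA k)
  calc ∑ k, ∫ y, y k ∂(μ.map F) = ∑ k, ∫ x, F x k ∂μ := by
        simp only [integral_map hF.aemeasurable (measurable_pi_apply _).aestronglyMeasurable]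
    _ = ∫ x, ∑ k, F x k ∂μ := (integral_finsetSum _ fun k _ => hFint k).symm
    _ ≤ ∫ x, ∑ k, x k ∂μ :=
        integral_mono_ae (integrable_finsetSum _ fun k _ => hFint k)
          (integrable_finsetSum _ fun k _ => hint k) hle
    _ = ∑ k, ∫ x, x k ∂μ := integral_finsetSum _ fun k _ => hint k

theorem exists_isEnergyEfficient_mutualInfo_eq (hanti : Antitone h) (hh : ∀ k, 0 < h k)
    {v : ℝ≥0} (hv : v ≠ 0) (hA : 0 ≤ A) {E : ℝ} {μ : Measure (Fin n → ℝ)}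
    [IsProbabilityMeasure μ] (hpeak : ∀ k, ∀ᵐ x ∂μ, x k ∈ Set.Icc 0 A)
    (havg : ∑ k, ∫ x, x k ∂μ ≤ E) :
    ∃ μ' : Measure (Fin n → ℝ), (IsProbabilityMeasure μ' ∧ (∀ k, ∀ᵐ x ∂μ', x k ∈ Set.Icc 0 A) ∧
      ∑ k, ∫ x, x k ∂μ' ≤ E ∧ ∀ᵐ x ∂μ', IsEnergyEfficient A x) ∧
      mutualInfo (misoJoint h v μ') = mutualInfo (misoJoint h v μ) := by
  set G : (Fin n → ℝ) → ℝ := fun x => ∑ k, h k * x k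
  set F : (Fin n → ℝ) → Fin n → ℝ := fun x => energyEfficientInput h A (G x)
  have hG : Measurable G := by fun_prop
  have hF : Measurable F := by unfold F energyEfficientInput; fun_prop
  have hFA : ∀ x k, F x k ∈ Set.Icc 0 A := fun x k => energyEfficientInput_mem_Icc (hh k) hA _
  have hbox : ∀ᵐ x ∂μ, ∀ k, x k ∈ Set.Icc 0 A := ae_all_iff.2 hpeak
  have hGF : ∀ᵐ x ∂μ, G (F x) = G x := by
    filter_upwards [hbox] with x hx
    exact sum_mul_energyEfficientInput hh hA (sum_mul_mem_Icc (fun k => (hh k).le) hx)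
  have hsum : ∀ᵐ x ∂μ, ∑ k, F x k ≤ ∑ k, x k := by
    filter_upwards [hbox, hGF] with x hx hGx
    exact sum_le_sum_of_isEnergyEfficient hanti hh hx (fun k => (hFA x k).1)
      (isEnergyEfficient_energyEfficientInput hh hA _) hGx
  have hmap : (μ.map F).map G = μ.map G := by
    rw [Measure.map_map hG hF]
    exact Measure.map_congr hGF
  have hEE : MeasurableSet {x : Fin n → ℝ | IsEnergyEfficient A x} := by
    unfold IsEnergyEfficient; measurability
  refine ⟨μ.map F, ⟨Measure.isProbabilityMeasure_map hF.aemeasurable, fun k => ?_,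
    (sum_integral_map_le hF hFA hpeak hsum).trans havg, ?_⟩, ?_⟩
  · rw [ae_map_iff hF.aemeasurable (measurableSet_Icc.preimage (measurable_pi_apply k))]
    exact ae_of_all _ fun x => hFA x k
  · rw [ae_map_iff hF.aemeasurable hEE]
    exact ae_of_all _ fun x => isEnergyEfficient_energyEfficientInput hh hA _
  · change mutualInfo (awgnJoint v G _) = mutualInfo (awgnJoint v G μ)
    rw [mutualInfo_awgnJoint hv hG, mutualInfo_awgnJoint hv hG, hmap]

end Capacity

end

theorem miso_capacity_energy_efficient_inputs_general (n : ℕ) (h : Fin n → ℝ)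
    (hord : ∀ i j : Fin n, i ≤ j → h j ≤ h i) (hpos : ∀ k, 0 < h k)
    (v : ℝ≥0) (hv : 0 < v)
    (A E : ℝ) (hA : 0 < A) :
    misoCapacity h v A E
      = ⨆ μ ∈ {μ : Measure (Fin n → ℝ) | IsProbabilityMeasure μ ∧
          (∀ k, ∀ᵐ x ∂μ, x k ∈ Set.Icc 0 A) ∧ (∑ k, ∫ x, x k ∂μ) ≤ E ∧
          (∀ᵐ x ∂μ, ∀ k : Fin n, 0 < x k → ∀ j : Fin n, j < k → x j = A)},
        mutualInfo (misoJoint h v μ) := by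
  refine le_antisymm (iSup₂_le fun μ ⟨hprob, hpeak, havg⟩ => ?_)
    (iSup₂_le fun μ ⟨hprob, hpeak, havg, _⟩ => le_iSup₂_of_le μ ⟨hprob, hpeak, havg⟩ le_rfl)
  obtain ⟨μ', hμ', hI⟩ := exists_isEnergyEfficient_mutualInfo_eq hord hpos hv.ne' hA.le hpeak havg
  exact le_iSup₂_of_le μ' hμ' hI.ge

theorem miso_capacity_energy_efficient_inputs (n : ℕ) (hn : 2 ≤ n) (h : Fin n → ℝ)
    (hord : ∀ i j : Fin n, i ≤ j → h j ≤ h i) (hpos : ∀ k, 0 < h k)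
    (v : ℝ≥0) (hv : 0 < v)
    (A E : ℝ) (hA : 0 < A) (hE : 0 < E) :
    misoCapacity h v A E
      = ⨆ μ ∈ {μ : Measure (Fin n → ℝ) | IsProbabilityMeasure μ ∧
          (∀ k, ∀ᵐ x ∂μ, x k ∈ Set.Icc 0 A) ∧ (∑ k, ∫ x, x k ∂μ) ≤ E ∧
          (∀ᵐ x ∂μ, ∀ k : Fin n, 0 < x k → ∀ j : Fin n, j < k → x j = A)},
        mutualInfo (misoJoint h v μ) :=
  miso_capacity_energy_efficient_inputs_general n h hord hpos v hv A E hA
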